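/- The residue at s = 1 of ζ(s)^2 x^s / s equals x(log x + 2γ − 1) for every x > 0, where γ is the Euler–Mascheroni constant. -/

import Mathlib

/-! Near `s = 1` we have `ζ s = 1/(s-1) + H s` with `H` analytic and `H 1 = γ` (Mathlib's
`tendsto_riemannZeta_sub_one_div` plus the removable singularity theorem), while `F s = x^s/s`
is analytic with `F 1 = x` and `F' 1 = x log x - x`. In `(1/(s-1) + H)² F` the coefficient of
`1/(s-1)` is therefore `F' 1 + 2 H 1 F 1 = x (log x + 2γ - 1)`; the Taylor remainders are
iterated `dslope`s, which stay analytic. -/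

open Complex Function

section dslope

variable {𝕜 : Type*} [NontriviallyNormedField 𝕜]

theorem AnalyticAt.dslope {E : Type*} [NormedAddCommGroup E] [NormedSpace 𝕜 E] {f : 𝕜 → E}
    {c : 𝕜} (hf : AnalyticAt 𝕜 f c) : AnalyticAt 𝕜 (dslope f c) c :=
  let ⟨_, hp⟩ := hf
  hp.has_fpower_series_dslope_fslope.analyticAt

variable {f : 𝕜 → 𝕜} {c s : 𝕜}

theorem div_sub_eq_add_dslope (hs : s ≠ c) :
    f s / (s - c) = f c / (s - c) + dslope f c s := by
  have hsc : s - c ≠ 0 := sub_ne_zero.mpr hs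
  field_simp
  have h := sub_smul_dslope f c s
  rw [smul_eq_mul] at h
  linear_combination -h

theorem div_sub_sq_eq_add_dslope_dslope (hs : s ≠ c) :
    f s / (s - c) ^ 2 = f c / (s - c) ^ 2 + deriv f c / (s - c) + dslope (dslope f c) c s := by
  rw [pow_two, ← div_div, div_sub_eq_add_dslope hs, add_div,
    div_sub_eq_add_dslope (f := dslope f c) hs, dslope_same, div_div, add_assoc]

theorem exists_analyticAt_inv_sub_add_sq_mul_eq {H F : 𝕜 → 𝕜} (hH : AnalyticAt 𝕜 H c)
    (hF : AnalyticAt 𝕜 F c) :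
    ∃ g : 𝕜 → 𝕜, AnalyticAt 𝕜 g c ∧ ∀ s ≠ c,
      (1 / (s - c) + H s) ^ 2 * F s =
        F c / (s - c) ^ 2 + (deriv F c + 2 * (H c * F c)) / (s - c) + g s := by
  refine ⟨fun s ↦ dslope (dslope F c) c s + 2 * dslope (H * F) c s + H s ^ 2 * F s,
    (hF.dslope.dslope.add (analyticAt_const.mul (hH.mul hF).dslope)).add ((hH.pow 2).mul hF),
    fun s hs ↦ ?_⟩
  have hF2 := div_sub_sq_eq_add_dslope_dslope (f := F) hs
  have hHF := div_sub_eq_add_dslope (f := H * F) hs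
  simp only [Pi.mul_apply] at hHF
  have hsc : s - c ≠ 0 := sub_ne_zero.mpr hs
  calc (1 / (s - c) + H s) ^ 2 * F s
      = F s / (s - c) ^ 2 + 2 * (H s * F s / (s - c)) + H s ^ 2 * F s := by
        field_simp; ring
    _ = _ := by rw [hF2, hHF]; ring

end dslope

noncomputable def riemannZetaRegularPart : ℂ → ℂ :=
  update (fun s ↦ riemannZeta s - 1 / (s - 1)) 1 Real.eulerMascheroniConstant

theorem riemannZetaRegularPart_one :
    riemannZetaRegularPart 1 = Real.eulerMascheroniConstant :=
  update_self ..

theorem riemannZeta_eq_inv_sub_one_add_regularPart {s : ℂ} (hs : s ≠ 1) :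
    riemannZeta s = 1 / (s - 1) + riemannZetaRegularPart s := by
  rw [riemannZetaRegularPart, update_of_ne hs]
  ring

theorem analyticAt_riemannZetaRegularPart : AnalyticAt ℂ riemannZetaRegularPart 1 := by
  refine analyticAt_of_differentiable_on_punctured_nhds_of_continuousAt ?_
    (continuousAt_update_same.mpr tendsto_riemannZeta_sub_one_div)
  filter_upwards [self_mem_nhdsWithin] with s (hs : s ≠ 1)
  have hdiff : DifferentiableAt ℂ (fun s ↦ riemannZeta s - 1 / (s - 1)) s :=
    (differentiableAt_riemannZeta hs).sub
      ((differentiableAt_const 1).div (differentiableAt_id.sub_const 1) (sub_ne_zero.mpr hs))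
  refine hdiff.congr_of_eventuallyEq ?_
  filter_upwards [isOpen_ne.mem_nhds hs] with t ht
  exact update_of_ne ht ..

theorem analyticAt_cpow_div_self_one {x : ℂ} (hx : x ≠ 0) :
    AnalyticAt ℂ (fun s ↦ x ^ s / s) 1 :=
  ((differentiable_id.const_cpow (Or.inl hx)).analyticAt 1).div analyticAt_id one_ne_zero

theorem hasDerivAt_cpow_div_self_one {x : ℂ} (hx : x ≠ 0) :
    HasDerivAt (fun s ↦ x ^ s / s) (x * log x - x) 1 :=
  (((hasDerivAt_id' 1).const_cpow (Or.inl hx)).div (hasDerivAt_id' 1) one_ne_zero).congr_deriv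
    (by simp)

/-- The residue at `s = 1` of `ζ(s)² x^s / s` equals `x (log x + 2γ − 1)` for `x > 0`:
the function has a pole of order two at `s = 1`, i.e. near `s = 1` it can be written as
`a/(s-1)² + R/(s-1) + g(s)` with `g` analytic at `1`, and the residue `R` (the coefficient
of `1/(s-1)`) equals `x (log x + 2γ − 1)`. -/
theorem residue_zeta_sq_at_one (x : ℝ) (hx : 0 < x) :
    ∃ (a : ℂ) (g : ℂ → ℂ), AnalyticAt ℂ g 1 ∧
      ∀ᶠ s : ℂ in nhdsWithin 1 {(1 : ℂ)}ᶜ,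
        riemannZeta s ^ 2 * (x : ℂ) ^ s / s =
          a / (s - 1) ^ 2 +
            ((x * (Real.log x + 2 * Real.eulerMascheroniConstant - 1) : ℝ) : ℂ) / (s - 1) +
            g s := by
  have hx0 : (x : ℂ) ≠ 0 := ofReal_ne_zero.mpr hx.ne'
  obtain ⟨g, hg, hexpand⟩ := exists_analyticAt_inv_sub_add_sq_mul_eq
    analyticAt_riemannZetaRegularPart (analyticAt_cpow_div_self_one hx0)
  have hres : deriv (fun s : ℂ ↦ (x : ℂ) ^ s / s) 1 + 2 * (riemannZetaRegularPart 1 * x) =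
      ((x * (Real.log x + 2 * Real.eulerMascheroniConstant - 1) : ℝ) : ℂ) := by
    rw [(hasDerivAt_cpow_div_self_one hx0).deriv, riemannZetaRegularPart_one,
      ← ofReal_log hx.le]
    push_cast
    ring
  refine ⟨x, g, hg, ?_⟩
  filter_upwards [self_mem_nhdsWithin] with s (hs : s ≠ 1)
  rw [mul_div_assoc, riemannZeta_eq_inv_sub_one_add_regularPart hs, hexpand s hs, ← hres,
    cpow_one, div_one]
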